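/- arXiv:1507.04811 — 4 statements merged into one kernel-verified Lean document; each statement's English description precedes it below -/
import Mathlib

section
/- Let J and K be disjoint finite index sets with I = J ∪ K. Suppose p : I → ℝ and Δp : I → ℝ with 0 < Δp i ≤ p i for all i, and positive constants α, β such that α·p j > β·Δp j for all j ∈ J and α·p k < β·Δp k for all k ∈ K. Assume J and K are nonempty and ∑_{j∈J} p j = ∑_{k∈K} p k. Define A₁ = (∑_{j∈J} p j + ∑_{k∈K} (p k − Δp k)) / (∑_{j∈J} p j) and A₂ = (∑_{j∈J} (p j − Δp j) + ∑_{k∈K} p k) / (∑_{k∈K} p k). Then A₁ < A₂. -/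
theorem lift_based_more_actions {ι : Type*} [DecidableEq ι]
    (J K : Finset ι) (hdisj : Disjoint J K)
    (hJ : J.Nonempty) (hK : K.Nonempty)
    (p Δp : ι → ℝ)
    (hΔ : ∀ i ∈ J ∪ K, 0 < Δp i ∧ Δp i ≤ p i)
    (α β : ℝ) (hα : 0 < α) (hβ : 0 < β)
    (hJwin : ∀ j ∈ J, α * p j > β * Δp j)
    (hKwin : ∀ k ∈ K, α * p k < β * Δp k)
    (hattr : ∑ j ∈ J, p j = ∑ k ∈ K, p k) :
    (∑ j ∈ J, p j + ∑ k ∈ K, (p k - Δp k)) / (∑ j ∈ J, p j)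
      < (∑ j ∈ J, (p j - Δp j) + ∑ k ∈ K, p k) / (∑ k ∈ K, p k) := by
  have hSpos : 0 < ∑ j ∈ J, p j := by
    apply Finset.sum_pos (fun j hj => ?_) hJ
    have h := hΔ j (Finset.mem_union_left _ hj)
    linarith [h.1, h.2]
  have h1 : β * ∑ j ∈ J, Δp j < α * ∑ j ∈ J, p j := by
    rw [Finset.mul_sum, Finset.mul_sum]
    exact Finset.sum_lt_sum_of_nonempty hJ (fun j hj => hJwin j hj)
  have h2 : α * ∑ k ∈ K, p k < β * ∑ k ∈ K, Δp k := by
    rw [Finset.mul_sum, Finset.mul_sum]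
    exact Finset.sum_lt_sum_of_nonempty hK (fun k hk => hKwin k hk)
  have hkey : ∑ j ∈ J, Δp j < ∑ k ∈ K, Δp k := by
    rw [hattr] at h1
    nlinarith
  rw [Finset.sum_sub_distrib, Finset.sum_sub_distrib, ← hattr]
  rw [div_lt_div_iff₀ hSpos hSpos]
  nlinarith
end

section
/- With the setup above (disjoint nonempty finite sets J, K; 0 < Δp i ≤ p i; α·p j > β·Δp j for j ∈ J; α·p k < β·Δp k for k ∈ K; α, β > 0), define the cost per attributed action C₁ = (∑_{j∈J} β·Δp j) / (∑_{j∈J} p j) and C₂ = (∑_{k∈K} α·p k) / (∑_{k∈K} p k). Then C₁ < α and C₂ = α, hence C₁ < C₂. -/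
theorem lift_based_costs_more {ι : Type*} [DecidableEq ι]
    (J K : Finset ι) (hdisj : Disjoint J K)
    (hJ : J.Nonempty) (hK : K.Nonempty)
    (p Δp : ι → ℝ)
    (hΔ : ∀ i ∈ J ∪ K, 0 < Δp i ∧ Δp i ≤ p i)
    (α β : ℝ) (hα : 0 < α) (hβ : 0 < β)
    (hJwin : ∀ j ∈ J, α * p j > β * Δp j)
    (hKwin : ∀ k ∈ K, α * p k < β * Δp k) :
    (∑ j ∈ J, β * Δp j) / (∑ j ∈ J, p j) < α ∧
    (∑ k ∈ K, α * p k) / (∑ k ∈ K, p k) = α ∧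
    (∑ j ∈ J, β * Δp j) / (∑ j ∈ J, p j)
      < (∑ k ∈ K, α * p k) / (∑ k ∈ K, p k) := by
  have hpJ : ∀ j ∈ J, 0 < p j := fun j hj =>
    lt_of_lt_of_le (hΔ j (Finset.mem_union_left _ hj)).1 (hΔ j (Finset.mem_union_left _ hj)).2
  have hpK : ∀ k ∈ K, 0 < p k := fun k hk =>
    lt_of_lt_of_le (hΔ k (Finset.mem_union_right _ hk)).1 (hΔ k (Finset.mem_union_right _ hk)).2
  have hSJ : 0 < ∑ j ∈ J, p j := Finset.sum_pos hpJ hJ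
  have hSK : 0 < ∑ k ∈ K, p k := Finset.sum_pos hpK hK
  have h1 : (∑ j ∈ J, β * Δp j) / (∑ j ∈ J, p j) < α := by
    rw [div_lt_iff₀ hSJ, Finset.mul_sum]
    exact Finset.sum_lt_sum_of_nonempty hJ (fun j hj => by
      have := hJwin j hj; linarith [this])
  have h2 : (∑ k ∈ K, α * p k) / (∑ k ∈ K, p k) = α := by
    rw [← Finset.mul_sum, mul_div_assoc, div_self hSK.ne', mul_one]
  exact ⟨h1, h2, by rw [h2]; exact h1⟩
end

section
/- Let J and K be disjoint nonempty finite sets, p, Δp, a : J ∪ K → ℝ with 0 < Δp i ≤ p i and 0 < a i ≤ 1, and constants C, β > 0. Suppose C·p j·a j > β·Δp j for all j ∈ J and C·p k·a k < β·Δp k for all k ∈ K, and ∑_{j∈J} p j·a j = ∑_{k∈K} p k·a k. Define A₁ = (∑_{j∈J} p j + ∑_{k∈K}(p k − Δp k)) / (∑_{j∈J} p j·a j) and A₂ = (∑_{j∈J}(p j − Δp j) + ∑_{k∈K} p k) / (∑_{k∈K} p k·a k). Then A₁ < A₂. -/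
/-!
With equal attributed mass `S = ∑_J p a = ∑_K p a > 0`, the two ratios share a denominator, and
`A₁ < A₂` reduces to `∑_J Δp < ∑_K Δp`. The winning conditions put `C · p a` above `β · Δp` on `J`
and below it on `K`, so `β ∑_J Δp < C · S < β ∑_K Δp`.
-/

open Finset

theorem Finset.sum_lt_sum_of_mul_lt_mul_of_sum_eq {ι 𝕜 : Type*} [Field 𝕜] [LinearOrder 𝕜]
    [IsStrictOrderedRing 𝕜] {s t : Finset ι} {f w : ι → 𝕜} {b c : 𝕜}
    (hs : s.Nonempty) (ht : t.Nonempty) (hb : 0 < b)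
    (hsf : ∀ i ∈ s, b * f i < c * w i) (htf : ∀ i ∈ t, c * w i < b * f i)
    (hw : ∑ i ∈ s, w i = ∑ i ∈ t, w i) :
    ∑ i ∈ s, f i < ∑ i ∈ t, f i := by
  refine lt_of_mul_lt_mul_left ?_ hb.le
  calc b * ∑ i ∈ s, f i = ∑ i ∈ s, b * f i := mul_sum _ _ _
    _ < ∑ i ∈ s, c * w i := sum_lt_sum_of_nonempty hs hsf
    _ = ∑ i ∈ t, c * w i := by rw [← mul_sum, hw, mul_sum]
    _ < ∑ i ∈ t, b * f i := sum_lt_sum_of_nonempty ht htf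
    _ = b * ∑ i ∈ t, f i := (mul_sum _ _ _).symm

theorem lift_based_more_actions_attribution_general {ι : Type*} [DecidableEq ι]
    (J K : Finset ι)
    (hJ : J.Nonempty) (hK : K.Nonempty)
    (p Δp a : ι → ℝ)
    (hΔ : ∀ i ∈ J ∪ K, 0 < Δp i ∧ Δp i ≤ p i)
    (ha : ∀ i ∈ J ∪ K, 0 < a i ∧ a i ≤ 1)
    (C β : ℝ) (hβ : 0 < β)
    (hJwin : ∀ j ∈ J, C * p j * a j > β * Δp j)
    (hKwin : ∀ k ∈ K, C * p k * a k < β * Δp k)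
    (hattr : ∑ j ∈ J, p j * a j = ∑ k ∈ K, p k * a k) :
    (∑ j ∈ J, p j + ∑ k ∈ K, (p k - Δp k)) / (∑ j ∈ J, p j * a j)
      < (∑ j ∈ J, (p j - Δp j) + ∑ k ∈ K, p k) / (∑ k ∈ K, p k * a k) := by
  have hS : 0 < ∑ j ∈ J, p j * a j := sum_pos (fun j hj ↦ by
    obtain ⟨hΔj, hΔp⟩ := hΔ j (mem_union_left K hj)
    exact mul_pos (hΔj.trans_le hΔp) (ha j (mem_union_left K hj)).1) hJ
  have hlift : ∑ j ∈ J, Δp j < ∑ k ∈ K, Δp k :=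
    sum_lt_sum_of_mul_lt_mul_of_sum_eq hJ hK hβ
      (fun j hj ↦ mul_assoc C (p j) (a j) ▸ hJwin j hj)
      (fun k hk ↦ mul_assoc C (p k) (a k) ▸ hKwin k hk) hattr
  rw [← hattr, div_lt_div_iff_of_pos_right hS, sum_sub_distrib, sum_sub_distrib]
  linarith

theorem lift_based_more_actions_attribution {ι : Type*} [DecidableEq ι]
    (J K : Finset ι) (hdisj : Disjoint J K)
    (hJ : J.Nonempty) (hK : K.Nonempty)
    (p Δp a : ι → ℝ)
    (hΔ : ∀ i ∈ J ∪ K, 0 < Δp i ∧ Δp i ≤ p i)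
    (ha : ∀ i ∈ J ∪ K, 0 < a i ∧ a i ≤ 1)
    (C β : ℝ) (hC : 0 < C) (hβ : 0 < β)
    (hJwin : ∀ j ∈ J, C * p j * a j > β * Δp j)
    (hKwin : ∀ k ∈ K, C * p k * a k < β * Δp k)
    (hattr : ∑ j ∈ J, p j * a j = ∑ k ∈ K, p k * a k) :
    (∑ j ∈ J, p j + ∑ k ∈ K, (p k - Δp k)) / (∑ j ∈ J, p j * a j)
      < (∑ j ∈ J, (p j - Δp j) + ∑ k ∈ K, p k) / (∑ k ∈ K, p k * a k) :=
  lift_based_more_actions_attribution_general J K hJ hK p Δp a hΔ ha C β hβ hJwin hKwin hattr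
end

section
/- Let J and K be disjoint nonempty finite sets, p, Δp, a : J ∪ K → ℝ with p i > 0, Δp i > 0, a i > 0, and constants C, β > 0. Suppose C·p j·a j > β·Δp j for all j ∈ J and C·p k·a k < β·Δp k for all k ∈ K. Define C₁ = (∑_{j∈J} β·Δp j) / (∑_{j∈J} p j·a j) and C₂ = (∑_{k∈K} C·p k·a k) / (∑_{k∈K} p k·a k). Then C₁ < C and C₂ = C, hence C₁ < C₂. -/
theorem lift_based_costs_more_attribution {ι : Type*} [DecidableEq ι]
    (J K : Finset ι) (hdisj : Disjoint J K)
    (hJ : J.Nonempty) (hK : K.Nonempty)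
    (p Δp a : ι → ℝ)
    (hp : ∀ i ∈ J ∪ K, 0 < p i)
    (hΔ : ∀ i ∈ J ∪ K, 0 < Δp i)
    (ha : ∀ i ∈ J ∪ K, 0 < a i)
    (C β : ℝ) (hC : 0 < C) (hβ : 0 < β)
    (hJwin : ∀ j ∈ J, C * p j * a j > β * Δp j)
    (hKwin : ∀ k ∈ K, C * p k * a k < β * Δp k) :
    (∑ j ∈ J, β * Δp j) / (∑ j ∈ J, p j * a j) < C ∧
    (∑ k ∈ K, C * p k * a k) / (∑ k ∈ K, p k * a k) = C ∧
    (∑ j ∈ J, β * Δp j) / (∑ j ∈ J, p j * a j)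
      < (∑ k ∈ K, C * p k * a k) / (∑ k ∈ K, p k * a k) := by
  have hpaJ : 0 < ∑ j ∈ J, p j * a j := by
    apply Finset.sum_pos (fun j hj => mul_pos (hp j (Finset.mem_union_left _ hj))
      (ha j (Finset.mem_union_left _ hj))) hJ
  have hpaK : 0 < ∑ k ∈ K, p k * a k := by
    apply Finset.sum_pos (fun k hk => mul_pos (hp k (Finset.mem_union_right _ hk))
      (ha k (Finset.mem_union_right _ hk))) hK
  have h2 : (∑ k ∈ K, C * p k * a k) / (∑ k ∈ K, p k * a k) = C := by
    rw [div_eq_iff (ne_of_gt hpaK), Finset.mul_sum]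
    exact Finset.sum_congr rfl fun k _ => by ring
  have h1 : (∑ j ∈ J, β * Δp j) / (∑ j ∈ J, p j * a j) < C := by
    rw [div_lt_iff₀ hpaJ, Finset.mul_sum]
    apply Finset.sum_lt_sum_of_nonempty hJ
    intro j hj
    have := hJwin j hj
    linarith [this]
  exact ⟨h1, h2, by rw [h2]; exact h1⟩
end
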